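/- Suppose Φ is of type B_n and r ≤ n − p_k. Then 𝒴'_{r−2j−1, j} = ∅ for every 0 ≤ j ≤ n − p_k. -/
import Mathlib


open Finset

inductive RSType where
  | B
  | C
  | D
deriving DecidableEq

noncomputable def eps (n : ℕ) (i : Fin n) : Fin n → ℝ := fun j => if j = i then 1 else 0

noncomputable def simpleRoot (n : ℕ) (t : RSType) (i : Fin n) : Fin n → ℝ :=
  if (i : ℕ) + 1 < n then
    eps n i - (fun j : Fin n => if (j : ℕ) = (i : ℕ) + 1 then 1 else 0)
  else
    match t with
    | RSType.B => eps n i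
    | RSType.C => (2 : ℝ) • eps n i
    | RSType.D => (fun j : Fin n => if (j : ℕ) + 1 = (i : ℕ) then 1 else 0) + eps n i

noncomputable def inn (n : ℕ) (x y : Fin n → ℝ) : ℝ := ∑ i, x i * y i

noncomputable def pairing (n : ℕ) (x y : Fin n → ℝ) : ℝ := 2 * inn n x y / inn n y y

/-- Membership in `Λ^{𝔭_I}` where `I = Π \ {α_{p 1}, …, α_{p k}}`:
`⟨μ, α^∨⟩ ∈ ℕ` for all simple roots `α ∈ I`. -/
def inLam (n : ℕ) (t : RSType) (p : ℕ → ℕ) (k : ℕ) (μ : Fin n → ℝ) : Prop :=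
  ∀ i : Fin n, (∀ j, 1 ≤ j → j ≤ k → (i : ℕ) + 1 ≠ p j) →
    ∃ m : ℕ, pairing n μ (simpleRoot n t i) = (m : ℝ)

def inLamZ (n : ℕ) (t : RSType) (p : ℕ → ℕ) (k : ℕ) (a : Fin n → ℤ) : Prop :=
  inLam n t p k (fun i => (a i : ℝ))

/-- `𝒳_r = {a ∈ ℤ^n : Σ |a_i| ≤ r}` (empty if `r < 0`). -/
def Xr (n : ℕ) (r : ℤ) : Set (Fin n → ℤ) := {a | ∑ i, |a i| ≤ r}

/-- `𝒳'_r = {a ∈ 𝒳_r : Σ a_i ≡ r (mod 2)}`. -/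
def Xr' (n : ℕ) (r : ℤ) : Set (Fin n → ℤ) :=
  {a | a ∈ Xr n r ∧ (2 : ℤ) ∣ ((∑ i, a i) - r)}

/-- `𝒳'_{r,j}`: for `j < n - pk` those `a ∈ 𝒳'_r` with `a_{n-j} ≠ 0`; and
`𝒳'_{r, n - pk} = 𝒳'_r`. -/
def Xrj (n : ℕ) (pk : ℕ) (r : ℤ) (j : ℕ) : Set (Fin n → ℤ) :=
  if j = n - pk then Xr' n r
  else {a | a ∈ Xr' n r ∧ ∃ i : Fin n, (i : ℕ) + j + 1 = n ∧ a i ≠ 0}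

def Yr (n : ℕ) (t : RSType) (p : ℕ → ℕ) (k : ℕ) (r : ℤ) : Set (Fin n → ℤ) :=
  {a | a ∈ Xr n r ∧ inLamZ n t p k a}

def Yr' (n : ℕ) (t : RSType) (p : ℕ → ℕ) (k : ℕ) (r : ℤ) : Set (Fin n → ℤ) :=
  {a | a ∈ Xr' n r ∧ inLamZ n t p k a}

def Yrj (n : ℕ) (t : RSType) (p : ℕ → ℕ) (k : ℕ) (r : ℤ) (j : ℕ) : Set (Fin n → ℤ) :=
  {a | a ∈ Xrj n (p k) r j ∧ inLamZ n t p k a}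

def epsZ (n : ℕ) (i : Fin n) : Fin n → ℤ := fun j => if j = i then 1 else 0

/-- The set `S_μ`: in type `B_n`, if `α_n ∉ I` (i.e. `p k = n`) or `μ_n ≠ 0`, it is
`{μ + hε_i ∈ Λ^{𝔭_I} : 1 ≤ i ≤ n, h ∈ {0, 1, -1}}`; otherwise (and in types `C_n`,
`D_n`) it is `{μ + hε_i ∈ Λ^{𝔭_I} : 1 ≤ i ≤ n, h ∈ {1, -1}}`. -/
def SS (n : ℕ) (t : RSType) (p : ℕ → ℕ) (k : ℕ) (μ : Fin n → ℤ) : Set (Fin n → ℤ) :=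
  {ν | (∃ (i : Fin n) (h : ℤ),
          h ∈ (if t = RSType.B ∧ (p k = n ∨ ∃ i' : Fin n, (i' : ℕ) = n - 1 ∧ μ i' ≠ 0)
               then ({0, 1, -1} : Set ℤ) else ({1, -1} : Set ℤ)) ∧
          ν = μ + h • epsZ n i) ∧
        inLamZ n t p k ν}

/-- `K_0 = {0}` and `K_r = ⋃_{μ ∈ K_{r-1}} S_μ`. -/
def KK (n : ℕ) (t : RSType) (p : ℕ → ℕ) (k : ℕ) : ℕ → Set (Fin n → ℤ)
  | 0 => {0}
  | r + 1 => ⋃ μ ∈ KK n t p k r, SS n t p k μ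


lemma inn_eps (n : ℕ) (x : Fin n → ℝ) (i : Fin n) : inn n x (eps n i) = x i := by
  simp [inn, eps, mul_ite]

lemma inn_sub (n : ℕ) (x y z : Fin n → ℝ) : inn n x (y - z) = inn n x y - inn n x z := by
  simp [inn, mul_sub, Finset.sum_sub_distrib]

lemma inn_sub_left (n : ℕ) (x y z : Fin n → ℝ) : inn n (y - z) x = inn n y x - inn n z x := by
  simp [inn, sub_mul, Finset.sum_sub_distrib]

lemma pairB_lt (n : ℕ) (μ : Fin n → ℝ) (i : Fin n) (h : (i : ℕ) + 1 < n) :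
    pairing n μ (simpleRoot n RSType.B i) = μ i - μ ⟨(i : ℕ) + 1, h⟩ := by
  have hfe : (fun j : Fin n => if (j : ℕ) = (i : ℕ) + 1 then (1 : ℝ) else 0)
      = eps n ⟨(i : ℕ) + 1, h⟩ := by
    funext j; simp [eps, Fin.ext_iff]
  have hne : (⟨(i : ℕ) + 1, h⟩ : Fin n) ≠ i := by
    simp [Fin.ext_iff]
  unfold pairing simpleRoot
  rw [if_pos h, hfe, inn_sub, inn_eps, inn_eps, inn_sub, inn_sub_left, inn_sub_left,
    inn_eps, inn_eps, inn_eps, inn_eps]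
  simp [eps, hne, Ne.symm hne]
  ring

lemma pairB_last (n : ℕ) (μ : Fin n → ℝ) (i : Fin n) (h : ¬ ((i : ℕ) + 1 < n)) :
    pairing n μ (simpleRoot n RSType.B i) = 2 * μ i := by
  unfold pairing simpleRoot
  rw [if_neg h]
  simp only []
  rw [inn_eps, inn_eps]
  simp [eps]

/-- End of the proof of Lemma 6.4(3): in type `B_n`, if `r ≤ n - p_k` then
`𝒴'_{r-2j-1, j} = ∅` for every `0 ≤ j ≤ n - p_k`. -/
theorem stmt17 (n k : ℕ) (hn : 2 ≤ n)
    (p : ℕ → ℕ) (hp0 : p 0 = 0)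
    (hmono : ∀ j, j < k → p j < p (j + 1))
    (hpk : p k ≤ n) (hpk1 : p (k + 1) = n)
    (r : ℕ) (hr : r ≤ n - p k) :
    ∀ j, j ≤ n - p k →
      Yrj n RSType.B p k ((r : ℤ) - 2 * (j : ℤ) - 1) j = ∅ := by
  -- monotonicity of p up to k
  have pm : ∀ m', m' ≤ k → ∀ m, m ≤ m' → p m ≤ p m' := by
    intro m' hm'
    induction m' with
    | zero =>
      intro m hm
      have : m = 0 := by omega
      subst this
      exact le_rfl
    | succ t ih =>
      intro m hm
      rcases Nat.eq_or_lt_of_le hm with heq | hlt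
      · subst heq; exact le_rfl
      · have h1 : m ≤ t := by omega
        have h2 : t ≤ k := by omega
        have := ih h2 m h1
        have := hmono t (by omega)
        omega
  intro j hj
  ext a
  simp only [Set.mem_empty_iff_false, iff_false]
  rintro ⟨hX, hL⟩
  -- The condition on removable roots holds for indices ≥ p k
  have hcond : ∀ i : Fin n, p k ≤ (i : ℕ) →
      (∀ j', 1 ≤ j' → j' ≤ k → (i : ℕ) + 1 ≠ p j') := by
    intro i hi j' _ hj' heq
    have := pm k le_rfl j' hj'
    omega
  -- step inequalities
  have step : ∀ (m : ℕ) (hm1 : m + 1 < n), p k ≤ m →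
      a ⟨m + 1, hm1⟩ ≤ a ⟨m, by omega⟩ := by
    intro m hm1 hpm
    set i : Fin n := ⟨m, by omega⟩
    obtain ⟨c, hc⟩ := hL i (hcond i hpm)
    rw [pairB_lt n _ i hm1] at hc
    have : (a i : ℝ) - (a ⟨m + 1, hm1⟩ : ℝ) = (c : ℝ) := hc
    have : a i - a ⟨m + 1, hm1⟩ = (c : ℤ) := by exact_mod_cast this
    omega
  have last : p k < n → 0 ≤ a ⟨n - 1, by omega⟩ := by
    intro hpkn
    set i : Fin n := ⟨n - 1, by omega⟩
    obtain ⟨c, hc⟩ := hL i (hcond i (by simp only [i]; omega))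
    rw [pairB_last n _ i (by simp [i]; omega)] at hc
    have : 2 * a i = (c : ℤ) := by exact_mod_cast hc
    omega
  -- all entries from p k on are nonnegative
  have nonneg : ∀ t m (hm : m < n), p k ≤ m → n - 1 - m = t → 0 ≤ a ⟨m, hm⟩ := by
    intro t
    induction t with
    | zero =>
      intro m hm hpm ht
      have hpkn : p k < n := by omega
      have : m = n - 1 := by omega
      subst this
      exact last hpkn
    | succ t ih =>
      intro m hm hpm ht
      have hm1 : m + 1 < n := by omega
      have h1 := ih (m + 1) hm1 (by omega) (by omega)
      have h2 := step m hm1 hpm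
      omega
  -- nonnegativity of the total abs sum
  have habs0 : (0 : ℤ) ≤ ∑ i, |a i| := Finset.sum_nonneg fun i _ => abs_nonneg _
  by_cases hcase : j = n - p k
  · -- then r - 2j - 1 < 0
    simp only [Xrj, if_pos hcase, Xr', Xr, Set.mem_setOf_eq] at hX
    have hb := hX.1
    omega
  · -- j < n - p k case
    have hjlt : j < n - p k := lt_of_le_of_ne hj hcase
    simp only [Xrj, if_neg hcase, Xr', Xr, Set.mem_setOf_eq] at hX
    obtain ⟨⟨hb, _⟩, i0, hi0, hi0ne⟩ := hX
    -- entries from p k to n-1-j are ≥ 1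
    have pos : ∀ t m (hm : m < n), p k ≤ m → m + t = n - 1 - j → 1 ≤ a ⟨m, hm⟩ := by
      intro t
      induction t with
      | zero =>
        intro m hm hpm ht
        have : (⟨m, hm⟩ : Fin n) = i0 := by
          apply Fin.ext; simp; omega
        rw [this]
        have h0 := nonneg (n - 1 - (i0 : ℕ)) (i0 : ℕ) i0.isLt (by omega) rfl
        have : (⟨(i0 : ℕ), i0.isLt⟩ : Fin n) = i0 := by apply Fin.ext; rfl
        rw [this] at h0
        rcases lt_or_eq_of_le h0 with h | h
        · omega
        · exact absurd h.symm hi0ne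
      | succ t ih =>
        intro m hm hpm ht
        have hm1 : m + 1 < n := by omega
        have h1 := ih (m + 1) hm1 (by omega) (by omega)
        have h2 := step m hm1 hpm
        omega
    -- sum of abs values is at least the count n - j - p k
    set b : ℕ → ℤ := fun m => if hm : m < n then |a ⟨m, hm⟩| else 0 with hbdef
    have hsum : ∑ i, |a i| = ∑ m ∈ Finset.range n, b m := by
      rw [Finset.sum_range]
      apply Finset.sum_congr rfl
      intro i _
      simp [b, i.isLt]
    have hsub : Finset.Icc (p k) (n - 1 - j) ⊆ Finset.range n := by
      intro m hm
      simp only [Finset.mem_Icc] at hm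
      simp only [Finset.mem_range]
      omega
    have hge : ∑ m ∈ Finset.range n, b m ≥ ∑ m ∈ Finset.Icc (p k) (n - 1 - j), b m := by
      apply Finset.sum_le_sum_of_subset_of_nonneg hsub
      intro m _ _
      simp only [b]
      split
      · exact abs_nonneg _
      · exact le_rfl
    have hcard : ∑ m ∈ Finset.Icc (p k) (n - 1 - j), b m
        ≥ (Finset.Icc (p k) (n - 1 - j)).card • (1 : ℤ) := by
      apply Finset.card_nsmul_le_sum
      intro m hm
      simp only [Finset.mem_Icc] at hm
      have hmn : m < n := by omega
      have h1 := pos (n - 1 - j - m) m hmn hm.1 (by omega)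
      simp only [b, dif_pos hmn]
      calc (1 : ℤ) ≤ a ⟨m, hmn⟩ := h1
        _ ≤ |a ⟨m, hmn⟩| := le_abs_self _
    rw [Nat.card_Icc] at hcard
    have hcount : (n - 1 - j + 1 - p k) = n - j - p k := by omega
    rw [hcount] at hcard
    simp only [nsmul_eq_mul, mul_one] at hcard
    have : ((n - j - p k : ℕ) : ℤ) ≤ ∑ i, |a i| := by
      rw [hsum]; exact le_trans hcard hge
    omega
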